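/- Let R be a unital ring in which every simple left R-module is projective. Then R is semisimple, i.e., R is a direct sum of simple left ideals. -/
import Mathlib

/-- A unital ring all of whose simple left modules are projective is
semisimple (a direct sum of simple left ideals). -/
theorem stmt3.{u} (R : Type u) [Ring R]
    (h : ∀ (S : Type u) [AddCommGroup S] [Module R S],
      IsSimpleModule R S → Module.Projective R S) :
    IsSemisimpleRing R := by
  rw [IsSemisimpleRing, ← sSup_simples_eq_top_iff_isSemisimpleModule]
  by_contra hne
  obtain ⟨m, hm, hle⟩ := Ideal.exists_le_maximal
    (sSup { p : Submodule R R | IsSimpleModule R p }) hne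
  have hsimple : IsSimpleModule R (R ⧸ m) :=
    isSimpleModule_iff_isCoatom.2 (Ideal.isMaximal_def.1 hm)
  have hproj : Module.Projective R (R ⧸ m) := h _ hsimple
  obtain ⟨g, hg⟩ := m.mkQ.exists_rightInverse_of_surjective m.range_mkQ
  have hginj : Function.Injective g := by
    intro x y hxy
    have := congrArg m.mkQ hxy
    have hx : m.mkQ (g x) = x := congrFun (congrArg DFunLike.coe hg) x
    have hy : m.mkQ (g y) = y := congrFun (congrArg DFunLike.coe hg) y
    rw [hx, hy] at this; exact this
  have hrangesimple : IsSimpleModule R (LinearMap.range g) :=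
    IsSimpleModule.congr (LinearEquiv.ofInjective g hginj).symm
  have hrle : LinearMap.range g ≤ m :=
    le_trans (le_sSup hrangesimple) hle
  haveI : Nontrivial (R ⧸ m) := IsSimpleModule.nontrivial R (R ⧸ m)
  obtain ⟨x, hx⟩ := exists_ne (0 : R ⧸ m)
  have : m.mkQ (g x) = x := congrFun (congrArg DFunLike.coe hg) x
  have hgx : g x ∈ m := hrle ⟨x, rfl⟩
  rw [← Submodule.Quotient.mk_eq_zero m] at hgx
  exact hx (by rw [← this]; exact hgx)
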